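/- For H > 0, the sextic S(x) = U²x⁶ - 2Hx² + 2H has six pairwise distinct complex roots if and only if U(8H - 27U²) ≠ 0. -/
import Mathlib


open Polynomial

/-- For H > 0, the sextic S(x) = U²x⁶ - 2Hx² + 2H has six pairwise distinct
complex roots (i.e. degree 6 and squarefree) iff U(8H - 27U²) ≠ 0. -/
theorem sextic_distinct_roots (H U : ℝ) (hH : 0 < H)
    (S : Polynomial ℂ)
    (hS : S = C ((U : ℂ) ^ 2) * X ^ 6 - C (2 * (H : ℂ)) * X ^ 2 + C (2 * (H : ℂ))) :
    (S.natDegree = 6 ∧ Squarefree S) ↔ U * (8 * H - 27 * U ^ 2) ≠ 0 := by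
  have hHC : (H : ℂ) ≠ 0 := by exact_mod_cast hH.ne'
  have hc6 : S.coeff 6 = (U : ℂ) ^ 2 := by
    simp only [hS, coeff_add, coeff_sub, coeff_C_mul, coeff_X_pow, coeff_C]
    norm_num
  have key : Squarefree S ↔ ∀ a : ℂ, eval a S ≠ 0 ∨ eval a (derivative S) ≠ 0 := by
    rw [← PerfectField.separable_iff_squarefree, Polynomial.Separable,
      Polynomial.isCoprime_iff_aeval_ne_zero_of_isAlgClosed (k := ℂ) ℂ S (derivative S)]
    simp [coe_aeval_eq_eval]
  have hev : ∀ a : ℂ, eval a S = (U:ℂ)^2 * a^6 - 2*H*a^2 + 2*H := by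
    intro a; simp [hS]
  have hev' : ∀ a : ℂ, eval a (derivative S) = 6*(U:ℂ)^2 * a^5 - 4*H*a := by
    intro a; simp [hS, derivative_pow]; ring
  rw [mul_ne_zero_iff, key]
  constructor
  · rintro ⟨hdeg, hroots⟩
    have hU : U ≠ 0 := by
      intro h0
      have hne : S ≠ 0 := by
        rcases hroots 0 with h | h <;> intro h' <;> simp [h'] at h
      have := leadingCoeff_ne_zero.mpr hne
      rw [leadingCoeff, hdeg, hc6, h0] at this
      simp at this
    refine ⟨hU, ?_⟩
    intro hcrit
    have hu : (U:ℂ)^2 = 8*(H:ℂ)/27 := by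
      have h1 : (8:ℝ)*H = 27*U^2 := by linarith [sub_eq_zero.mp hcrit]
      have h2 := congrArg (Complex.ofReal) h1
      push_cast at h2
      linear_combination -h2 / 27
    set a : ℂ := ((Real.sqrt (3/2) : ℝ) : ℂ) with ha
    have ha2 : a^2 = 3/2 := by
      rw [ha]
      norm_cast
      rw [Real.sq_sqrt (by norm_num)]
      norm_num
    have ha4 : a^4 = 9/4 := by linear_combination (a^2+3/2)*ha2
    have ha6 : a^6 = 27/8 := by linear_combination (a^4+(3/2)*a^2+9/4)*ha2
    rcases hroots a with h | h
    · exact h (by rw [hev]; linear_combination a^6*hu + (8*(H:ℂ)/27)*ha6 - 2*(H:ℂ)*ha2)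
    · exact h (by rw [hev']; linear_combination 6*a^5*hu + (16*(H:ℂ)/9)*a*ha4)
  · rintro ⟨hU, hcrit⟩
    have hUC : (U:ℂ) ≠ 0 := by exact_mod_cast hU
    constructor
    · rw [hS]
      compute_degree!
    · intro a
      by_contra hcon
      push_neg at hcon
      obtain ⟨e1, e2⟩ := hcon
      rw [hev] at e1
      rw [hev'] at e2
      have ha0 : a ≠ 0 := by
        rintro rfl
        rw [show (U:ℂ)^2 * 0^6 - 2*H*0^2 + 2*H = 2*H by ring] at e1
        exact hHC (by linear_combination e1 / 2)
      have h4 : 6*(U:ℂ)^2*a^4 = 4*H := by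
        have hfac : a*(6*(U:ℂ)^2*a^4 - 4*H) = 0 := by linear_combination e2
        rcases mul_eq_zero.mp hfac with h | h
        · exact absurd h ha0
        · linear_combination h
      have h4H : (4:ℂ)*H ≠ 0 := mul_ne_zero (by norm_num) hHC
      have hA : a^2 = 3/2 := by
        apply mul_left_cancel₀ h4H
        linear_combination (-3)*e1 + (a^2/2)*h4
      have h27 : 27*(U:ℂ)^2 = 8*H := by
        linear_combination 2*h4 + (-12)*(U:ℂ)^2*(a^2+3/2)*hA
      have h27R : 27*U^2 = 8*H := by exact_mod_cast h27
      exact hcrit (by linarith)
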